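/- arXiv:1105.3154 — 5 statements merged into one kernel-verified Lean document; each statement's English description precedes it below -/
import Mathlib

section
/- Let n ≥ 2 and 2 ≤ j ≤ n. Let π ∈ S_n with π(j) = 1, and define σ ∈ S_n by σ(i) = π(i+1) for 1 ≤ i ≤ j−2, σ(j−1) = π(1), and σ(i) = π(i) for i ≥ j. Define π* ∈ S_{n−1} by π*(i) = σ(i) − 1 for 1 ≤ i ≤ j−1 and π*(i) = σ(i+1) − 1 for j ≤ i ≤ n−1. Then π* is a well-defined permutation of {1,...,n−1} and the number of cycles of π* equals the number of cycles of π. -/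
open Equiv BigOperators

/-- Number of cycles of a permutation, counting fixed points as cycles of length 1. -/
def cycleCount {n : ℕ} (s : Equiv.Perm (Fin n)) : ℕ :=
  Multiset.card s.cycleType + (n - s.support.card)

open Equiv.Perm in
theorem cycleCount_swap_mul {n : ℕ} (f : Equiv.Perm (Fin n)) (x : Fin n) (hx : f x ≠ x) :
    cycleCount (Equiv.swap x (f x) * f) = cycleCount f + 1 := by
  classical
  set c := f.cycleOf x with hc
  have hxs : x ∈ f.support := mem_support.mpr hx
  have hmem : c ∈ f.cycleFactorsFinset := cycleOf_mem_cycleFactorsFinset_iff.mpr hxs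
  have hcx : c x = f x := f.cycleOf_apply_self x
  have hcyc : c.IsCycle := isCycle_cycleOf f hx
  have hdisj : Equiv.Perm.Disjoint (f * c⁻¹) c := disjoint_mul_inv_of_mem_cycleFactorsFinset hmem
  set g := f * c⁻¹ with hg
  have hgc : g * c = f := by rw [hg, inv_mul_cancel_right]
  have hfg : f = c * g := by rw [← hdisj.commute.eq, hgc]
  have hccx : c (c x) = f (f x) := by
    rw [hcx, hc, Equiv.Perm.cycleOf_apply, if_pos]
    exact (Equiv.Perm.sameCycle_apply_right).mpr (Equiv.Perm.SameCycle.refl f x)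
  have hSle : f.support.card ≤ n := by
    simpa using Finset.card_le_univ f.support
  have hSsplit : f.support.card = c.support.card + g.support.card := by
    rw [hfg, (hdisj.symm).support_mul]
    rw [Finset.card_union_of_disjoint (disjoint_iff_disjoint_support.mp hdisj.symm)]
  have hKsplit : Multiset.card f.cycleType =
      Multiset.card c.cycleType + Multiset.card g.cycleType := by
    rw [hfg, (hdisj.symm).cycleType_mul]; simp
  by_cases hffx : f (f x) = x
  · -- two-cycle case: c = swap x (f x)
    have hcswap : c = Equiv.swap x (f x) := by
      have := hcyc.eq_swap_of_apply_apply_eq_self (x := x) (by rwa [hcx]) (by rw [hccx]; exact hffx)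
      rwa [hcx] at this
    have hτ : Equiv.swap x (f x) * f = g := by
      have : g = Equiv.swap x (f x) * f := by
        rw [hg, hcswap, Equiv.swap_inv, Equiv.mul_swap_eq_swap_mul, hffx, Equiv.swap_comm]
      exact this.symm
    have hKc : Multiset.card c.cycleType = 1 := by
      rw [hcyc.cycleType]; simp
    have hSc : c.support.card = 2 := by rw [hcswap]; exact Equiv.Perm.card_support_swap hx.symm
    rw [hτ]
    unfold cycleCount
    omega
  · -- longer cycle case
    have hcx' : c x ≠ x := by rwa [hcx]
    have hccx' : c (c x) ≠ x := by rwa [hccx]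
    set c' := Equiv.swap x (c x) * c with hc'
    have hc'cyc : c'.IsCycle := hcyc.swap_mul hcx' hccx'
    have hc'supp : c'.support = c.support \ {x} := support_swap_mul_eq c x hccx'
    have hxc : x ∈ c.support := mem_support.mpr hcx'
    have hSc' : c'.support.card = c.support.card - 1 := by
      rw [hc'supp, Finset.sdiff_singleton_eq_erase, Finset.card_erase_of_mem hxc]
    have hdisj' : Equiv.Perm.Disjoint c' g := by
      rw [disjoint_iff_disjoint_support]
      refine Finset.disjoint_of_subset_left ?_ (disjoint_iff_disjoint_support.mp hdisj.symm)
      rw [hc'supp]; exact Finset.sdiff_subset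
    have hτ : Equiv.swap x (f x) * f = c' * g := by
      rw [hc', mul_assoc, ← hfg, hcx]
    have hKc : Multiset.card c.cycleType = 1 := by rw [hcyc.cycleType]; simp
    have hKc' : Multiset.card c'.cycleType = 1 := by rw [hc'cyc.cycleType]; simp
    have hScpos : 1 ≤ c.support.card := Finset.card_pos.mpr ⟨x, hxc⟩
    have hK : Multiset.card (c' * g).cycleType =
        Multiset.card c'.cycleType + Multiset.card g.cycleType := by
      rw [hdisj'.cycleType_mul]; simp
    have hS : (c' * g).support.card = c'.support.card + g.support.card := by
      rw [hdisj'.support_mul,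
        Finset.card_union_of_disjoint (disjoint_iff_disjoint_support.mp hdisj')]
    rw [hτ]
    unfold cycleCount
    omega

/-- Main Lemma: if `π (j) = 1` (here, in 0-indexed form, `π j = 0` with `j ≠ 0`),
then the permutation `π*` of `{1,...,n-1}` given by `π*(i) = π(i+1) - 1` for `i ≠ j-1`
and `π*(j-1) = π(1) - 1` is well defined and has the same number of cycles as `π`. -/
theorem stmt3 {m : ℕ} (j : Fin (m + 1)) (hj : j ≠ 0)
    (π : Equiv.Perm (Fin (m + 1))) (hπ : π j = 0) :
    ∃ π' : Equiv.Perm (Fin m),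
      (∀ i : Fin m,
        (π' i : ℕ) = (if i.succ = j then (π 0 : ℕ) else (π i.succ : ℕ)) - 1) ∧
      cycleCount π' = cycleCount π := by
  classical
  have h0 : π 0 ≠ 0 := fun h => hj (π.injective (hπ.trans h.symm))
  set σ := π * Equiv.swap 0 j with hσdef
  have hσ0 : σ 0 = 0 := by
    rw [hσdef, Equiv.Perm.mul_apply, Equiv.swap_apply_left, hπ]
  have hσswap : σ = Equiv.swap 0 (π 0) * π := by
    rw [hσdef, Equiv.mul_swap_eq_swap_mul, hπ, Equiv.swap_comm]
  have hcount : cycleCount σ = cycleCount π + 1 := by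
    rw [hσswap]; exact cycleCount_swap_mul π 0 h0
  have hne : ∀ i : Fin m, σ i.succ ≠ 0 := fun i h =>
    Fin.succ_ne_zero i (σ.injective (h.trans hσ0.symm))
  have hne' : ∀ i : Fin m, σ⁻¹ i.succ ≠ 0 := fun i h => by
    have h2 := congrArg σ h
    rw [← Equiv.Perm.mul_apply, mul_inv_cancel, Equiv.Perm.one_apply, hσ0] at h2
    exact Fin.succ_ne_zero i h2
  set π' : Equiv.Perm (Fin m) :=
    { toFun := fun i => (σ i.succ).pred (hne i)
      invFun := fun i => (σ⁻¹ i.succ).pred (hne' i)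
      left_inv := fun i => by simp
      right_inv := fun i => by simp } with hπ'def
  set e : Fin m ≃ {x : Fin (m + 1) // x ≠ 0} :=
    { toFun := fun i => ⟨i.succ, Fin.succ_ne_zero i⟩
      invFun := fun x => x.1.pred x.2
      left_inv := fun i => Fin.pred_succ i
      right_inv := fun x => Subtype.ext (Fin.succ_pred x.1 x.2) } with hedef
  have hext : π'.extendDomain e = σ := by
    refine Equiv.ext fun x => ?_
    by_cases hx : x = 0
    · subst hx
      rw [Equiv.Perm.extendDomain_apply_not_subtype π' e (by simp), hσ0]
    · rw [Equiv.Perm.extendDomain_apply_subtype π' e hx]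
      simp [hπ'def, hedef]
  have hct : π'.cycleType = σ.cycleType := by
    rw [← hext, Equiv.Perm.cycleType_extendDomain]
  have hsc : π'.support.card = σ.support.card := by
    rw [← hext, Equiv.Perm.card_support_extend_domain]
  have hle : σ.support.card ≤ m := by
    have h0s : (0 : Fin (m + 1)) ∉ σ.support := Equiv.Perm.notMem_support.mpr hσ0
    have hsub : σ.support ⊆ Finset.univ.erase 0 := fun y hy =>
      Finset.mem_erase.mpr ⟨fun h => h0s (h ▸ hy), Finset.mem_univ y⟩
    calc σ.support.card ≤ (Finset.univ.erase (0 : Fin (m + 1))).card :=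
          Finset.card_le_card hsub
      _ = m := by
          rw [Finset.card_erase_of_mem (Finset.mem_univ _), Finset.card_univ]
          simp
  refine ⟨π', fun i => ?_, ?_⟩
  · have hval : (π' i : ℕ) = (σ i.succ : ℕ) - 1 := by
      show ((σ i.succ).pred (hne i) : ℕ) = _
      rw [Fin.coe_pred]
    rw [hval]
    by_cases h : i.succ = j
    · rw [if_pos h, hσdef, Equiv.Perm.mul_apply, h, Equiv.swap_apply_right]
    · rw [if_neg h, hσdef, Equiv.Perm.mul_apply,
        Equiv.swap_apply_of_ne_of_ne (Fin.succ_ne_zero i) h]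
  · unfold cycleCount
    rw [hct, hsc]
    unfold cycleCount at hcount
    omega
end

section
/- Let n ≥ 2 and 2 ≤ j ≤ n, and let Φ : {π ∈ S_n : π(j) = 1} → S_{n−1} be defined by Φ(π)(i) = π(i+1) − 1 for i ≠ j−1 and Φ(π)(j−1) = π(1) − 1. Then π is an n-cycle if and only if Φ(π) is an (n−1)-cycle. -/
open Equiv BigOperators

section Aux

variable {m : ℕ} {j : Fin (m + 1)} {π : Equiv.Perm (Fin (m + 1))} {π' : Equiv.Perm (Fin m)}

lemma key_step (hj : j ≠ 0) (hπ : π j = 0)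
    (hΦ : ∀ i : Fin m,
      (π' i : ℕ) = (if i.succ = j then (π 0 : ℕ) else (π i.succ : ℕ)) - 1)
    (i : Fin m) :
    (π' i).succ = if i.succ = j then π 0 else π i.succ := by
  have hx : (if i.succ = j then π 0 else π i.succ) ≠ 0 := by
    split_ifs with h
    · intro h0
      exact hj (π.injective (h0.trans hπ.symm)).symm
    · intro h0
      exact h (π.injective (h0.trans hπ.symm))
  have hxv : 1 ≤ ((if i.succ = j then π 0 else π i.succ) : Fin (m+1)).val := by
    rcases Nat.eq_zero_or_pos ((if i.succ = j then π 0 else π i.succ) : Fin (m+1)).val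
      with h | h
    · exact absurd (Fin.ext h) hx
    · exact h
  have h1 := hΦ i
  have h2 : ((if i.succ = j then π 0 else π i.succ) : Fin (m+1)).val
      = (if i.succ = j then (π 0 : ℕ) else (π i.succ : ℕ)) := by
    split_ifs <;> rfl
  apply Fin.ext
  rw [Fin.val_succ, h2, h1, ← h2]
  omega

lemma step_sameCycle (hj : j ≠ 0) (hπ : π j = 0)
    (hΦ : ∀ i : Fin m,
      (π' i : ℕ) = (if i.succ = j then (π 0 : ℕ) else (π i.succ : ℕ)) - 1)
    (i : Fin m) : π.SameCycle i.succ (π' i).succ := by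
  rw [key_step hj hπ hΦ i]
  split_ifs with h
  · refine ⟨2, ?_⟩
    have : π i.succ = 0 := by rw [h, hπ]
    simp [zpow_ofNat, pow_succ, Equiv.Perm.mul_apply, this]
  · exact ⟨1, by simp⟩

lemma L1 (hj : j ≠ 0) (hπ : π j = 0)
    (hΦ : ∀ i : Fin m,
      (π' i : ℕ) = (if i.succ = j then (π 0 : ℕ) else (π i.succ : ℕ)) - 1)
    {a b : Fin m} (h : π'.SameCycle a b) : π.SameCycle a.succ b.succ := by
  obtain ⟨k, -, rfl⟩ := h.exists_pow_eq'
  clear h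
  induction k with
  | zero => exact Equiv.Perm.SameCycle.refl _ _
  | succ k ih =>
    have h2 : (π' ^ (k+1)) a = π' ((π' ^ k) a) := by
      rw [pow_succ']; rfl
    rw [h2]
    exact ih.trans (step_sameCycle hj hπ hΦ _)

lemma L2aux (hj : j ≠ 0) (hπ : π j = 0)
    (hΦ : ∀ i : Fin m,
      (π' i : ℕ) = (if i.succ = j then (π 0 : ℕ) else (π i.succ : ℕ)) - 1) :
    ∀ k : ℕ, ∀ a b : Fin m, (π ^ k) a.succ = b.succ → π'.SameCycle a b := by
  intro k
  induction k using Nat.strong_induction_on with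
  | _ k ih =>
    intro a b hab
    match k, hab with
    | 0, hab =>
      cases Fin.succ_injective _ hab
      exact Equiv.Perm.SameCycle.refl _ _
    | k+1, hab =>
      have hstep := key_step hj hπ hΦ a
      by_cases h : a.succ = j
      · -- π a.succ = 0
        rw [if_pos h] at hstep
        have hπa : π a.succ = 0 := by rw [h, hπ]
        match k, hab with
        | 0, hab =>
          rw [pow_one, hπa] at hab
          exact absurd hab.symm (Fin.succ_ne_zero b)
        | k+1, hab =>
          have : (π ^ (k + 1 + 1)) a.succ = (π ^ k) ((π' a).succ) := by
            rw [hstep, pow_succ, pow_succ, Equiv.Perm.mul_apply, Equiv.Perm.mul_apply, hπa]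
          rw [this] at hab
          exact Equiv.Perm.SameCycle.trans ⟨1, by simp⟩ (ih k (by omega) _ _ hab)
      · rw [if_neg h] at hstep
        have : (π ^ (k + 1)) a.succ = (π ^ k) ((π' a).succ) := by
          rw [hstep, pow_succ, Equiv.Perm.mul_apply]
        rw [this] at hab
        exact Equiv.Perm.SameCycle.trans ⟨1, by simp⟩ (ih k (by omega) _ _ hab)

end Aux

lemma count_iff {n : ℕ} (hn : 1 ≤ n) (s : Equiv.Perm (Fin n)) :
    cycleCount s = 1 ↔ ∀ x y, s.SameCycle x y := by
  by_cases h1 : s = 1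
  · subst h1
    simp only [cycleCount, Equiv.Perm.cycleType_one, Equiv.Perm.support_one,
      Multiset.card_zero, Finset.card_empty, Nat.sub_zero, zero_add]
    constructor
    · intro h x y
      subst h
      exact ⟨0, by simpa using (Subsingleton.elim x y)⟩
    · intro h
      by_contra hne
      have h2 : 2 ≤ n := by omega
      have := h ⟨0, by omega⟩ ⟨1, by omega⟩
      simp only [Equiv.Perm.sameCycle_one] at this
      exact absurd (congrArg Fin.val this) (by simp)
  · have hct : Multiset.card s.cycleType ≠ 0 := by
      simp only [ne_eq, Multiset.card_eq_zero, Equiv.Perm.cycleType_eq_zero]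
      exact h1
    have hsle : s.support.card ≤ n := by
      simpa using Finset.card_le_univ s.support
    have hiff : cycleCount s = 1 ↔ s.IsCycle ∧ s.support.card = n := by
      unfold cycleCount
      rw [← Equiv.Perm.card_cycleType_eq_one]
      omega
    rw [hiff]
    constructor
    · rintro ⟨hc, hcard⟩ x y
      have hsupp : s.support = Finset.univ :=
        Finset.eq_univ_of_card _ (by simpa using hcard)
      obtain ⟨z, hz, hzall⟩ := hc
      have hx : s x ≠ x := by
        have := Finset.mem_univ x; rw [← hsupp, Equiv.Perm.mem_support] at this; exact this
      have hy : s y ≠ y := by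
        have := Finset.mem_univ y; rw [← hsupp, Equiv.Perm.mem_support] at this; exact this
      exact (hzall hx).symm.trans (hzall hy)
    · intro h
      have hne : ∃ a, s a ≠ a := by
        by_contra hc
        push_neg at hc
        exact h1 (Equiv.ext hc)
      obtain ⟨a, ha⟩ := hne
      have hfix : ∀ x, s x ≠ x := by
        intro x hx
        obtain ⟨k, hk⟩ := h a x
        have hkx : (s ^ k) x = x := Equiv.Perm.zpow_apply_eq_self_of_apply_eq_self hx k
        have := (s ^ k).injective (hk.trans hkx.symm)
        exact ha (this ▸ hx)
      refine ⟨⟨a, ha, fun {y} _ => h a y⟩, ?_⟩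
      have : s.support = Finset.univ := Finset.eq_univ_iff_forall.2 fun x =>
        Equiv.Perm.mem_support.2 (hfix x)
      rw [this]
      simp

/-- `π` is a full cycle iff `Φ(π)` is a full cycle, where `Φ` is the relabeling of the
Main Lemma (a permutation is a full cycle iff it has exactly one cycle). -/
theorem stmt5 {m : ℕ} (j : Fin (m + 1)) (hj : j ≠ 0)
    (π : Equiv.Perm (Fin (m + 1))) (hπ : π j = 0)
    (π' : Equiv.Perm (Fin m))
    (hΦ : ∀ i : Fin m,
      (π' i : ℕ) = (if i.succ = j then (π 0 : ℕ) else (π i.succ : ℕ)) - 1) :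
    cycleCount π = 1 ↔ cycleCount π' = 1 := by
  obtain ⟨m', rfl⟩ : ∃ m', m = m' + 1 := by
    cases m with
    | zero => have := j.isLt; exact absurd (Fin.ext (by omega)) hj
    | succ m' => exact ⟨m', rfl⟩
  rw [count_iff (by omega) π, count_iff (by omega) π']
  constructor
  · intro h a b
    obtain ⟨k, -, hk⟩ := (h a.succ b.succ).exists_pow_eq'
    exact L2aux hj hπ hΦ k a b hk
  · intro h x y
    have hj0 : π.SameCycle j 0 := ⟨1, by simpa using hπ⟩
    have key : ∀ x, π.SameCycle x 0 := by
      intro x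
      by_cases hx : x = 0
      · exact hx ▸ Equiv.Perm.SameCycle.refl _ _
      · have : x = (x.pred hx).succ := (Fin.succ_pred x hx).symm
        rw [this]
        have hjs : j = (j.pred hj).succ := (Fin.succ_pred j hj).symm
        have := L1 hj hπ hΦ (h (x.pred hx) (j.pred hj))
        rw [← hjs] at this
        exact this.trans hj0
    exact (key x).trans (key y).symm
end

section
/- Fix m ≥ 1 and let ω be a primitive m-th root of unity in ℂ. For an n×n complex matrix A define per_ω A = ∑_{s ∈ S_n} ω^{d(s)} ∏_{i=1}^n a_{i,s(i)}, where d(s) = n − γ(s) is the decrement of s. Then for n ≥ 2, per_ω A = a_{11} per_ω(Ā_{11}) + ω ∑_{j=2}^n a_{1j} per_ω(Ā_{1j}). -/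
open Matrix BigOperators

/-- The `ω`-permanent: `per_ω A = ∑_s ω^(d(s)) ∏_i a_{i,s(i)}`, where `d(s) = n - γ(s)`
is the decrement of `s`. -/
noncomputable def perOmega {k : ℕ} (ω : ℂ) (A : Matrix (Fin k) (Fin k) ℂ) : ℂ :=
  ∑ s : Equiv.Perm (Fin k), ω ^ (k - cycleCount s) * ∏ i, A i (s i)

/-- The combinatorial minor matrix `Ā_{1j}`. -/
def cminor {R : Type*} [CommRing R] {n : ℕ}
    (A : Matrix (Fin (n + 1)) (Fin (n + 1)) R) (j : Fin (n + 1)) :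
    Matrix (Fin n) (Fin n) R :=
  fun i k => A i.succ (if (k : ℕ) + 1 = (j : ℕ) then 0 else k.succ)

open Finset

namespace Equiv.Perm

variable {α : Type*} [Fintype α] [DecidableEq α]

/-- The decrement `n - γ(σ)` of the paper, computed without reference to `n`
(see `cycleCount_add_decrement`). -/
def decrement (σ : Perm α) : ℕ :=
  #σ.support - Multiset.card σ.cycleType

theorem card_cycleType_le_card_support (σ : Perm α) :
    Multiset.card σ.cycleType ≤ #σ.support := by
  rw [← sum_cycleType]
  simpa using Multiset.card_nsmul_le_sum (s := σ.cycleType) (a := 1)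
    fun _ h => (one_lt_of_mem_cycleType h).le

theorem decrement_one : decrement (1 : Perm α) = 0 := by
  simp [decrement]

theorem Disjoint.decrement_mul {σ τ : Perm α} (h : Disjoint σ τ) :
    (σ * τ).decrement = σ.decrement + τ.decrement := by
  have hσ := card_cycleType_le_card_support σ
  have hτ := card_cycleType_le_card_support τ
  rw [decrement, decrement, decrement, h.cycleType_mul, h.card_support_mul, Multiset.card_add]
  omega

theorem IsCycle.decrement_eq {c : Perm α} (hc : c.IsCycle) : c.decrement = #c.support - 1 := by
  simp [decrement, hc.cycleType]

theorem IsCycle.decrement_swap_mul {c : Perm α} (hc : c.IsCycle) {x : α} (hx : c x ≠ x) :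
    (swap x (c x) * c).decrement + 1 = c.decrement := by
  have hxc : x ∈ c.support := mem_support.2 hx
  by_cases h2 : c (c x) = x
  · have hcs : c = swap x (c x) := hc.eq_swap_of_apply_apply_eq_self hx h2
    rw [hc.decrement_eq, hcs, swap_apply_left, swap_mul_self, decrement_one,
      card_support_swap hx.symm]
  · rw [(hc.swap_mul hx h2).decrement_eq, hc.decrement_eq, support_swap_mul_eq c x h2,
      sdiff_singleton_eq_erase, card_erase_of_mem hxc]
    have := hc.two_le_card_support
    omega

theorem decrement_swap_mul_self {s : Perm α} {x : α} (hx : s x ≠ x) :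
    (swap x (s x) * s).decrement + 1 = s.decrement := by
  -- only the cycle `c` through `x` is affected: `s = (s * c⁻¹) * c` with disjoint factors
  set c := s.cycleOf x
  have hcx : c x = s x := s.cycleOf_apply_self x
  have hgc : Disjoint (s * c⁻¹) c := disjoint_mul_inv_of_mem_cycleFactorsFinset
    (cycleOf_mem_cycleFactorsFinset_iff.mpr (mem_support.2 hx))
  have hxc : x ∈ c.support := mem_support.2 (hcx ▸ hx)
  have hswap : (swap x (c x)).support ≤ c.support := by
    rw [support_swap (hcx ▸ hx).symm, insert_subset_iff, singleton_subset_iff]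
    exact ⟨hxc, apply_mem_support.2 hxc⟩
  have hgsc : Disjoint (s * c⁻¹) (swap x (c x) * c) :=
    hgc.mono le_rfl ((support_mul_le _ _).trans (sup_le hswap le_rfl))
  have hsplit : swap x (s x) * s = s * c⁻¹ * (swap x (c x) * c) := by
    conv_lhs => rw [← hcx, ← inv_mul_cancel_right s c]
    rw [← mul_assoc, (hgc.mono le_rfl hswap).symm.commute.eq, mul_assoc]
  rw [hsplit, hgsc.decrement_mul, add_assoc, (s.isCycle_cycleOf hx).decrement_swap_mul (hcx ▸ hx),
    ← hgc.decrement_mul, inv_mul_cancel_right]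

end Equiv.Perm

open Equiv Equiv.Perm

theorem cycleCount_add_decrement {n : ℕ} (s : Perm (Fin n)) : cycleCount s + s.decrement = n := by
  have h₁ := card_cycleType_le_card_support s
  have h₂ : #s.support ≤ n := by simpa using card_le_univ s.support
  rw [cycleCount, decrement]
  omega

theorem perOmega_eq_sum_pow_decrement {k : ℕ} (ω : ℂ) (A : Matrix (Fin k) (Fin k) ℂ) :
    perOmega ω A = ∑ s : Perm (Fin k), ω ^ s.decrement * ∏ i, A i (s i) := by
  refine Finset.sum_congr rfl fun s _ => ?_
  have := cycleCount_add_decrement s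
  congr 2
  omega

theorem decomposeFin_symm_zero_eq_extendDomain {n : ℕ} (e : Perm (Fin n)) :
    decomposeFin.symm (0, e) = e.extendDomain (finSuccAboveEquiv 0) := by
  ext x : 1
  induction x using Fin.cases with
  | zero => rw [decomposeFin_symm_apply_zero, extendDomain_apply_not_subtype _ _ (by simp)]
  | succ i =>
    have hi : finSuccAboveEquiv 0 i = ⟨i.succ, i.succ_ne_zero⟩ :=
      Subtype.ext (congrFun Fin.succAbove_zero i)
    rw [decomposeFin_symm_apply_succ, swap_self, refl_apply,
      extendDomain_apply_subtype e _ (b := i.succ) i.succ_ne_zero, ← hi, symm_apply_apply,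
      finSuccAboveEquiv_apply]
    exact (congrFun Fin.succAbove_zero (e i)).symm

theorem decrement_decomposeFin_symm_zero {n : ℕ} (e : Perm (Fin n)) :
    (decomposeFin.symm (0, e)).decrement = e.decrement := by
  rw [decomposeFin_symm_zero_eq_extendDomain, decrement, decrement, cycleType_extendDomain,
    card_support_extend_domain]

theorem decomposeFin_symm_eq_swap_mul {n : ℕ} (p : Fin (n + 1)) (e : Perm (Fin n)) :
    decomposeFin.symm (p, e) = swap 0 p * decomposeFin.symm (0, e) := by
  ext x : 1
  induction x using Fin.cases with
  | zero => simp [decomposeFin_symm_apply_zero]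
  | succ i => simp [decomposeFin_symm_apply_succ]

theorem decrement_decomposeFin_symm_of_ne_zero {n : ℕ} {p : Fin (n + 1)} (hp : p ≠ 0)
    (e : Perm (Fin n)) : (decomposeFin.symm (p, e)).decrement = e.decrement + 1 := by
  have h := decrement_swap_mul_self (s := swap 0 p * decomposeFin.symm (0, e)) (x := 0)
    (by simpa [decomposeFin_symm_apply_zero] using hp)
  rw [Perm.mul_apply, decomposeFin_symm_apply_zero, swap_apply_left, swap_mul_self_mul,
    decrement_decomposeFin_symm_zero] at h
  rw [decomposeFin_symm_eq_swap_mul, ← h]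

theorem swap_zero_apply_succ {n : ℕ} (p : Fin (n + 1)) (k : Fin n) :
    swap 0 p k.succ = if (k : ℕ) + 1 = (p : ℕ) then 0 else k.succ := by
  have hiff : (k : ℕ) + 1 = (p : ℕ) ↔ k.succ = p := by rw [Fin.ext_iff, Fin.val_succ]
  split_ifs with h
  · rw [hiff.mp h, swap_apply_right]
  · exact swap_apply_of_ne_of_ne (Fin.succ_ne_zero k) (mt hiff.mpr h)

theorem prod_decomposeFin_symm_apply {R : Type*} [CommRing R] {n : ℕ}
    (A : Matrix (Fin (n + 1)) (Fin (n + 1)) R) (p : Fin (n + 1)) (e : Perm (Fin n)) :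
    ∏ i, A i (decomposeFin.symm (p, e) i) = A 0 p * ∏ i, cminor A p i (e i) := by
  simp only [Fin.prod_univ_succ, decomposeFin_symm_apply_zero, decomposeFin_symm_apply_succ,
    swap_zero_apply_succ, cminor]

theorem stmt8_general (ω : ℂ) {n : ℕ}
    (A : Matrix (Fin (n + 2)) (Fin (n + 2)) ℂ) :
    perOmega ω A = A 0 0 * perOmega ω (cminor A 0) +
      ω * ∑ j : Fin (n + 1), A 0 j.succ * perOmega ω (cminor A j.succ) := by
  rw [perOmega_eq_sum_pow_decrement, ← decomposeFin.symm.sum_comp, Fintype.sum_prod_type,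
    Fin.sum_univ_succ, Finset.mul_sum]
  congr 1
  · rw [perOmega_eq_sum_pow_decrement, Finset.mul_sum]
    refine Finset.sum_congr rfl fun e _ => ?_
    rw [prod_decomposeFin_symm_apply, decrement_decomposeFin_symm_zero]
    ring
  · refine Finset.sum_congr rfl fun j _ => ?_
    rw [perOmega_eq_sum_pow_decrement, Finset.mul_sum, Finset.mul_sum]
    refine Finset.sum_congr rfl fun e _ => ?_
    rw [prod_decomposeFin_symm_apply, decrement_decomposeFin_symm_of_ne_zero j.succ_ne_zero,
      pow_succ]
    ring

/-- Expansion of the `ω`-permanent over the first row: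
`per_ω A = a_{11} per_ω(Ā_{11}) + ω ∑_{j=2}^n a_{1j} per_ω(Ā_{1j})`. -/
theorem stmt8 {m : ℕ} (hm : 1 ≤ m) (ω : ℂ) (hω : IsPrimitiveRoot ω m) {n : ℕ}
    (A : Matrix (Fin (n + 2)) (Fin (n + 2)) ℂ) :
    perOmega ω A = A 0 0 * perOmega ω (cminor A 0) +
      ω * ∑ j : Fin (n + 1), A 0 j.succ * perOmega ω (cminor A j.succ) :=
  stmt8_general ω A
end

section
/- Define Cycl(A) = ∑_{s} ∏_{i=1}^n a_{i,s(i)}, where the sum is over all full cycles (n-cycles) s ∈ S_n. Then for n ≥ 2, Cycl(A) = ∑_{j=2}^n a_{1j} Cycl(Ā_{1j}), where Ā_{1j} is the combinatorial minor matrix of a_{1j}. -/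
open Matrix BigOperators

/-- The cyclic permanent: sum of diagonal products over all full cycles. -/
def cyclPer {R : Type*} [CommRing R] {k : ℕ} (A : Matrix (Fin k) (Fin k) R) : R :=
  ∑ s ∈ Finset.univ.filter (fun s : Equiv.Perm (Fin k) => cycleCount s = 1),
    ∏ i, A i (s i)

lemma cycleCount_eq_one_iff {k : ℕ} (s : Equiv.Perm (Fin (k + 1))) :
    cycleCount s = 1 ↔ ∀ x, s.SameCycle 0 x := by
  constructor
  · intro h
    unfold cycleCount at h
    rcases Nat.eq_zero_or_pos (Multiset.card s.cycleType) with h0 | hpos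
    · have hs : s = 1 := Equiv.Perm.card_cycleType_eq_zero.mp h0
      subst hs
      simp only [Equiv.Perm.support_one, Finset.card_empty, Nat.sub_zero, h0] at h
      have hk : k = 0 := by omega
      subst hk
      intro x
      have : x = 0 := Fin.fin_one_eq_zero x
      subst this
      exact Equiv.Perm.SameCycle.refl _ _
    · have h1 : Multiset.card s.cycleType = 1 := by
        have hle : s.support.card ≤ k + 1 := by
          simpa using Finset.card_le_card (Finset.subset_univ s.support)
        omega
      have hc : s.IsCycle := Equiv.Perm.card_cycleType_eq_one.mp h1
      have hsupp : s.support = Finset.univ := by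
        apply Finset.eq_univ_of_card
        have hle : s.support.card ≤ k + 1 := by
          simpa using Finset.card_le_card (Finset.subset_univ s.support)
        simp only [Fintype.card_fin]
        omega
      obtain ⟨a, ha, hall⟩ := hc
      intro x
      have h0 : s 0 ≠ 0 := Equiv.Perm.mem_support.mp
        (by rw [hsupp]; exact Finset.mem_univ _)
      have hx : s x ≠ x := Equiv.Perm.mem_support.mp
        (by rw [hsupp]; exact Finset.mem_univ _)
      exact (hall h0).symm.trans (hall hx)
  · intro h
    by_cases hs : s = 1
    · subst hs
      have hk : k = 0 := by
        by_contra hk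
        have h1 : (1 : Fin (k+1)) ≠ 0 := by
          simp [Fin.ext_iff, Fin.val_one, Nat.mod_eq_of_lt (by omega : 1 < k + 1)]
        exact h1 ((Equiv.Perm.sameCycle_one.mp (h 1)).symm)
      subst hk
      simp [cycleCount]
    · have hy : ∃ y, s y ≠ y := by
        by_contra hy
        push_neg at hy
        refine hs (Equiv.ext ?_)
        intro x
        simp [hy x]
      obtain ⟨y, hy⟩ := hy
      have hc : s.IsCycle := ⟨y, hy, fun z _ => (h y).symm.trans (h z)⟩
      have hsupp : s.support = Finset.univ := by
        apply Finset.eq_univ_iff_forall.mpr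
        intro x
        rw [Equiv.Perm.mem_support]
        intro hx
        obtain ⟨m, hm⟩ := (h x).symm
        rw [Equiv.Perm.zpow_apply_eq_self_of_apply_eq_self hx m] at hm
        subst hm
        obtain ⟨m', hm'⟩ := h y
        rw [Equiv.Perm.zpow_apply_eq_self_of_apply_eq_self hx m'] at hm'
        subst hm'
        exact hy hx
      unfold cycleCount
      rw [hc.cycleType, hsupp]
      simp

lemma decompose_succ_apply {n : ℕ} (j : Fin (n + 1)) (e : Equiv.Perm (Fin (n + 1)))
    (x : Fin (n + 1)) :
    Equiv.Perm.decomposeFin.symm (j.succ, e) x.succ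
      = if e x = j then 0 else (e x).succ := by
  rw [Equiv.Perm.decomposeFin_symm_apply_succ]
  by_cases hx : e x = j
  · rw [hx, Equiv.swap_apply_right]
    simp
  · rw [Equiv.swap_apply_of_ne_of_ne (Fin.succ_ne_zero _)
      (fun hc => hx (Fin.succ_injective _ hc))]
    simp [hx]

lemma claim1 {n : ℕ} (j : Fin (n + 1)) (e : Equiv.Perm (Fin (n + 1))) :
    ∀ m : ℕ, ∀ x : Fin (n + 1), (e ^ m) j = x →
      (Equiv.Perm.decomposeFin.symm (j.succ, e)).SameCycle 0 x.succ := by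
  set s := Equiv.Perm.decomposeFin.symm (j.succ, e) with hs
  have h0 : s 0 = j.succ := Equiv.Perm.decomposeFin_symm_apply_zero _ _
  have base : s.SameCycle 0 j.succ := ⟨1, by simp [h0]⟩
  intro m
  induction m with
  | zero => intro x hx; simp at hx; subst hx; exact base
  | succ m ih =>
    intro x hx
    have hw : (e ^ (m+1)) j = e ((e ^ m) j) := by
      rw [pow_succ', Equiv.Perm.mul_apply]
    set w := (e ^ m) j with hwdef
    have ihw := ih w rfl
    by_cases hew : e w = j
    · rw [hx.symm, hw, hew]
      exact base
    · have : s w.succ = x.succ := by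
        rw [decompose_succ_apply, if_neg hew, ← hx, hw]
      exact ihw.trans ⟨1, by simp [this]⟩

lemma claim2 {n : ℕ} (j : Fin (n + 1)) (e : Equiv.Perm (Fin (n + 1))) :
    ∀ m : ℕ, ∀ x : Fin (n + 1),
      ((Equiv.Perm.decomposeFin.symm (j.succ, e)) ^ m) 0 = x.succ →
      e.SameCycle j x := by
  set s := Equiv.Perm.decomposeFin.symm (j.succ, e) with hs
  have h0 : s 0 = j.succ := Equiv.Perm.decomposeFin_symm_apply_zero _ _
  intro m
  induction m with
  | zero =>
    intro x hx
    simp at hx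
    exact absurd hx.symm (Fin.succ_ne_zero x)
  | succ m ih =>
    intro x hx
    have hw : (s ^ (m+1)) 0 = s ((s ^ m) 0) := by
      rw [pow_succ', Equiv.Perm.mul_apply]
    rw [hw] at hx
    rcases Fin.eq_zero_or_eq_succ ((s ^ m) 0) with hz | ⟨w, hz⟩
    · rw [hz, h0] at hx
      have : j = x := Fin.succ_injective _ hx
      subst this
      exact Equiv.Perm.SameCycle.refl _ _
    · rw [hz, decompose_succ_apply] at hx
      by_cases hew : e w = j
      · rw [if_pos hew] at hx
        exact absurd hx.symm (Fin.succ_ne_zero x)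
      · rw [if_neg hew] at hx
        have hxe : e w = x := Fin.succ_injective _ hx
        have := ih w hz
        exact this.trans ⟨1, by simp [hxe]⟩

lemma key_iff {n : ℕ} (j : Fin (n + 1)) (e : Equiv.Perm (Fin (n + 1))) :
    cycleCount (Equiv.Perm.decomposeFin.symm (j.succ, e)) = 1 ↔ cycleCount e = 1 := by
  rw [cycleCount_eq_one_iff, cycleCount_eq_one_iff]
  constructor
  · intro hs
    have hj : ∀ x, e.SameCycle j x := by
      intro x
      obtain ⟨m, _, hm⟩ := (hs x.succ).exists_pow_eq'
      exact claim2 j e m x hm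
    intro x
    exact (hj 0).symm.trans (hj x)
  · intro he
    have hj : ∀ x, e.SameCycle j x := fun x => (he j).symm.trans (he x)
    intro y
    rcases Fin.eq_zero_or_eq_succ y with hy | ⟨x, hy⟩
    · subst hy; exact Equiv.Perm.SameCycle.refl _ _
    · subst hy
      obtain ⟨m, _, hm⟩ := (hj x).exists_pow_eq'
      exact claim1 j e m x hm

lemma zero_case {n : ℕ} (e : Equiv.Perm (Fin (n + 1))) :
    cycleCount (Equiv.Perm.decomposeFin.symm ((0 : Fin (n + 2)), e)) ≠ 1 := by
  intro hcc
  have h := (cycleCount_eq_one_iff _).mp hcc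
  set s := Equiv.Perm.decomposeFin.symm ((0 : Fin (n + 2)), e) with hs
  have h0 : s 0 = 0 := Equiv.Perm.decomposeFin_symm_apply_zero _ _
  obtain ⟨m, hm⟩ := h 1
  have : (s ^ m) 0 = 0 := Equiv.Perm.zpow_apply_eq_self_of_apply_eq_self h0 m
  rw [this] at hm
  exact absurd hm.symm one_ne_zero

lemma prod_eq {R : Type*} [CommRing R] {n : ℕ}
    (A : Matrix (Fin (n + 2)) (Fin (n + 2)) R) (j : Fin (n + 1))
    (e : Equiv.Perm (Fin (n + 1))) :
    (∏ i, A i (Equiv.Perm.decomposeFin.symm (j.succ, e) i))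
      = A 0 j.succ * ∏ x, cminor A j.succ x (e x) := by
  rw [Fin.prod_univ_succ, Equiv.Perm.decomposeFin_symm_apply_zero]
  congr 1
  · apply Finset.prod_congr rfl
    intro x _
    rw [decompose_succ_apply]
    unfold cminor
    by_cases hx : e x = j
    · rw [if_pos hx, if_pos (by simp [hx])]
    · rw [if_neg hx, if_neg (by simp [Fin.ext_iff] at hx ⊢; omega)]

/-- Expansion of the cyclic permanent over the first row:
`Cycl(A) = ∑_{j=2}^n a_{1j} Cycl(Ā_{1j})`. -/
theorem stmt10 {R : Type*} [CommRing R] {n : ℕ}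
    (A : Matrix (Fin (n + 2)) (Fin (n + 2)) R) :
    cyclPer A = ∑ j : Fin (n + 1), A 0 j.succ * cyclPer (cminor A j.succ) := by
  unfold cyclPer
  rw [Finset.sum_filter]
  rw [Fintype.sum_equiv (Equiv.Perm.decomposeFin)
    (fun s => if cycleCount s = 1 then ∏ i, A i (s i) else 0)
    (fun q => if cycleCount (Equiv.Perm.decomposeFin.symm q) = 1
      then ∏ i, A i (Equiv.Perm.decomposeFin.symm q i) else 0)
    (fun s => by simp only [Equiv.symm_apply_apply])]
  rw [Fintype.sum_prod_type]
  rw [Fin.sum_univ_succ]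
  have hz : ∑ e : Equiv.Perm (Fin (n + 1)),
      (if cycleCount (Equiv.Perm.decomposeFin.symm ((0 : Fin (n+2)), e)) = 1
        then ∏ i, A i (Equiv.Perm.decomposeFin.symm ((0 : Fin (n+2)), e) i) else 0) = 0 := by
    apply Finset.sum_eq_zero
    intro e _
    rw [if_neg (zero_case e)]
  rw [hz, zero_add]
  apply Finset.sum_congr rfl
  intro j _
  rw [Finset.mul_sum, Finset.sum_filter]
  apply Finset.sum_congr rfl
  intro e _
  simp only [key_iff, prod_eq]
end

section
/- Let n ≥ 2 and 2 ≤ j ≤ n, let π ∈ S_n with π(j) = 1, and let π* = Φ(π) ∈ S_{n−1} where Φ(π)(i) = π(i+1) − 1 for i ≠ j−1 and Φ(π)(j−1) = π(1) − 1. Then for every cycle of π of length l not containing j, π* has a corresponding cycle of the same length l; explicitly, if {k_1, ..., k_l} is a cycle of π with j ∉ {k_1,...,k_l}, then {k_1 − 1, ..., k_l − 1} (with indices reduced appropriately through the relabeling) forms a cycle of π* of length l. -/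
open Equiv BigOperators

/-- The length of the cycle of `s` containing `x` (fixed points giving length 1). -/
noncomputable def cycleLength {n : ℕ} (s : Equiv.Perm (Fin n)) (x : Fin n) : ℕ :=
  Set.ncard {y | s.SameCycle x y}

/-- Every cycle of `π` not containing `j` corresponds, under the relabeling `π* = Φ(π)`
of the Main Lemma, to a cycle of `π*` of the same length: if `k` is not in the cycle of
`π` containing `j` (so `k ≠ 0`, since `π(j) = 1` puts `1` in that cycle), then the cycle
of `π*` containing the relabeled element `k - 1` has the same length as the cycle of `π`
containing `k`. -/
theorem stmt17 {m : ℕ} (j : Fin (m + 1)) (hj : j ≠ 0)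
    (π : Equiv.Perm (Fin (m + 1))) (hπ : π j = 0)
    (π' : Equiv.Perm (Fin m))
    (hΦ : ∀ i : Fin m,
      (π' i : ℕ) = (if i.succ = j then (π 0 : ℕ) else (π i.succ : ℕ)) - 1) :
    ∀ k : Fin (m + 1), (hk : k ≠ 0) → ¬ π.SameCycle j k →
      cycleLength π' (k.pred hk) = cycleLength π k := by
  intro k hk hkj
  have hm : 1 ≤ m := by
    rcases m with _ | m
    · have := j.isLt
      exact absurd (Fin.ext (by omega : (j : ℕ) = (0 : Fin 1).val)) hj
    · omega
  -- the relabeling map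
  set g : Fin (m + 1) → Fin m := fun y => ⟨(y : ℕ) - 1, by omega⟩ with hg
  -- every element in the cycle of k is nonzero and ≠ j
  have hcyc : ∀ y : Fin (m + 1), π.SameCycle k y → y ≠ 0 ∧ y ≠ j := by
    intro y hy
    have h0 : π.SameCycle j 0 := ⟨1, by simpa using hπ⟩
    constructor
    · rintro rfl
      exact hkj (h0.trans hy.symm)
    · rintro rfl
      exact hkj hy.symm
  -- key commutation
  have key : ∀ y : Fin (m + 1), π.SameCycle k y → π' (g y) = g (π y) := by
    intro y hy
    obtain ⟨hy0, hyj⟩ := hcyc y hy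
    have hyv : (y : ℕ) ≠ 0 := fun h => hy0 (Fin.ext h)
    have hsucc : (g y).succ = y := by
      apply Fin.ext
      simp [hg, Fin.val_succ]
      omega
    have := hΦ (g y)
    rw [hsucc, if_neg hyj] at this
    exact Fin.ext this
  have iter : ∀ i : ℕ, (π' ^ i) (g k) = g ((π ^ i) k) := by
    intro i
    induction i with
    | zero => simp
    | succ i ih =>
      have hmem : π.SameCycle k ((π ^ i) k) := ⟨(i : ℤ), by simp [zpow_natCast]⟩
      rw [pow_succ', pow_succ', Equiv.Perm.mul_apply, Equiv.Perm.mul_apply, ih,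
        key _ hmem]
  -- the cycle of g k under π' is the image of the cycle of k under π
  have hset : {z | π'.SameCycle (g k) z} = g '' {y | π.SameCycle k y} := by
    ext z
    constructor
    · intro hz
      obtain ⟨i, _, hi⟩ := Equiv.Perm.SameCycle.exists_pow_eq' hz
      exact ⟨(π ^ i) k, ⟨(i : ℤ), by simp [zpow_natCast]⟩, by rw [← iter i, hi]⟩
    · rintro ⟨y, hy, rfl⟩
      obtain ⟨i, _, hi⟩ := Equiv.Perm.SameCycle.exists_pow_eq' hy
      exact ⟨(i : ℤ), by rw [zpow_natCast, iter i, hi]⟩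
  have hgk : k.pred hk = g k := by
    apply Fin.ext
    simp [hg]
  have hinj : Set.InjOn g {y | π.SameCycle k y} := by
    intro a ha b hb hab
    have ha0 : (a : ℕ) ≠ 0 := fun h => (hcyc a ha).1 (Fin.ext h)
    have hb0 : (b : ℕ) ≠ 0 := fun h => (hcyc b hb).1 (Fin.ext h)
    have : (a : ℕ) - 1 = (b : ℕ) - 1 := congrArg Fin.val hab
    apply Fin.ext
    omega
  unfold cycleLength
  rw [hgk, hset, Set.ncard_image_of_injOn hinj]
end
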